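/- Let X be a Lefschetz complex over a ring R with unity, let 𝒱 be a multivector field on X, and assume X is invariant with respect to 𝒱. A pair (A,R) of subsets of X is an attractor-repeller pair in X if and only if the following four conditions hold: (i) A is an attractor and R is a repeller; (ii) A ∩ R = ∅; (iii) for every x ∉ A and every full solution ρ through x, α(ρ) ⊆ R; (iv) for every x ∉ R and every full solution ρ through x, ω(ρ) ⊆ A. -/

import Mathlib

open scoped Classical

namespace CMVF

variable {R : Type*} [Ring R] {X : Type*} [Fintype X]

/-- A Lefschetz complex over `R` with cells `X`. -/
structure Lefschetz (R : Type*) [Ring R] (X : Type*) [Fintype X] where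
  dim : X → ℕ
  κ : X → X → R
  dim_facet : ∀ x y, κ x y ≠ 0 → dim x = dim y + 1
  κ_sq : ∀ x z, (∑ y : X, κ x y * κ y z) = 0

namespace Lefschetz

variable (L : Lefschetz R X)

/-- The face order `y ≤κ x` : the partial order generated by the facet relation. -/
def le (y x : X) : Prop := Relation.ReflTransGen (fun a b => L.κ b a ≠ 0) y x

/-- Closure of a set of cells: all faces of cells of `A`. -/
def cls (A : Set X) : Set X := {z | ∃ a ∈ A, L.le z a}

/-- Closure of a single cell. -/
def clPt (x : X) : Set X := L.cls {x}

/-- The minimal open set containing `x`. -/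
def opn (x : X) : Set X := {z | L.le x z}

/-- `A` is closed. -/
def Closed (A : Set X) : Prop := L.cls A = A

/-- The mouth of `A`. -/
def mo (A : Set X) : Set X := L.cls A \ A

/-- `A` is proper: its mouth is closed. -/
def Proper (A : Set X) : Prop := L.Closed (L.mo A)

/-- Relative closure within an ambient subcomplex `W`. -/
def clsIn (W A : Set X) : Set X := L.cls A ∩ W

/-- Relative mouth within an ambient subcomplex `W`. -/
def moIn (W A : Set X) : Set X := L.clsIn W A \ A

/-- The boundary operator of the subcomplex determined by `A`
(`∂ x = ∑ y ∈ A, κ x y • y` for `x ∈ A`). -/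
noncomputable def bd (A : Set X) : (X → R) →ₗ[R] (X → R) where
  toFun f := fun y => if y ∈ A then ∑ x : X, (if x ∈ A then f x * L.κ x y else 0) else 0
  map_add' f g := by
    funext y
    by_cases hy : y ∈ A
    · simp only [hy, if_true, Pi.add_apply]
      rw [← Finset.sum_add_distrib]
      refine Finset.sum_congr rfl fun x _ => ?_
      by_cases hx : x ∈ A <;> simp [hx, add_mul]
    · simp [hy]
  map_smul' r f := by
    funext y
    by_cases hy : y ∈ A
    · simp only [hy, if_true, Pi.smul_apply, smul_eq_mul, RingHom.id_apply]
      rw [Finset.mul_sum]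
      refine Finset.sum_congr rfl fun x _ => ?_
      by_cases hx : x ∈ A <;> simp [hx, mul_assoc]
    · simp [hy]

/-- The `n`-chains of the subcomplex determined by `A`. -/
noncomputable def chainGroup (A : Set X) (n : ℕ) : Submodule R (X → R) :=
  Submodule.span R {f | ∃ x ∈ A, L.dim x = n ∧ f = Pi.single x 1}

/-- The `n`-cycles of the subcomplex determined by `A`. -/
noncomputable def cycles (A : Set X) (n : ℕ) : Submodule R (X → R) :=
  L.chainGroup A n ⊓ LinearMap.ker (L.bd A)

/-- The `n`-boundaries of the subcomplex determined by `A`. -/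
noncomputable def boundaries (A : Set X) (n : ℕ) : Submodule R (X → R) :=
  (L.chainGroup A (n + 1)).map (L.bd A)

/-- The Lefschetz homology `H^κ_n(A)` of the subcomplex determined by `A`. -/
noncomputable def homology (A : Set X) (n : ℕ) : Type _ :=
  (L.cycles A n) ⧸ ((L.boundaries A n).comap (L.cycles A n).subtype)

noncomputable instance homologyAddCommGroup (A : Set X) (n : ℕ) :
    AddCommGroup (L.homology A n) :=
  inferInstanceAs (AddCommGroup
    ((L.cycles A n) ⧸ ((L.boundaries A n).comap (L.cycles A n).subtype)))

noncomputable instance homologyModule (A : Set X) (n : ℕ) :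
    Module R (L.homology A n) :=
  inferInstanceAs (Module R
    ((L.cycles A n) ⧸ ((L.boundaries A n).comap (L.cycles A n).subtype)))

/-- `A` is a zero space: its Lefschetz homology vanishes. -/
def HomologyZero (A : Set X) : Prop := ∀ n, Subsingleton (L.homology A n)

/-- The Poincaré polynomial `p_A(t) = ∑ rank H^κ_n(A) tⁿ`. -/
noncomputable def poincare (A : Set X) : Polynomial ℕ :=
  ∑ n ∈ Finset.image L.dim Finset.univ,
    Polynomial.C (Module.finrank R (L.homology A n)) * Polynomial.X ^ n

/-- `V` is a multivector: proper, with a unique maximal element. -/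
def IsMV (V : Set X) : Prop :=
  L.Proper V ∧ ∃! m, m ∈ V ∧ ∀ x ∈ V, L.le x m

/-- A regular multivector: one with vanishing Lefschetz homology. -/
def Regular (V : Set X) : Prop := L.HomologyZero V

end Lefschetz

/-- A combinatorial multivector field on a Lefschetz complex: a partition into multivectors. -/
structure MVField {R : Type*} [Ring R] {X : Type*} [Fintype X] (L : Lefschetz R X) where
  mvs : Set (Set X)
  isMV : ∀ V ∈ mvs, L.IsMV V
  cover : ∀ x : X, ∃! V, V ∈ mvs ∧ x ∈ V

namespace MVField

variable {L : Lefschetz R X} (F : MVField L)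

/-- `[x]` : the multivector containing `x`. -/
noncomputable def mclass (x : X) : Set X := (F.cover x).exists.choose

lemma mclass_spec (x : X) : F.mclass x ∈ F.mvs ∧ x ∈ F.mclass x :=
  (F.cover x).exists.choose_spec

/-- `x★` : the dominant cell of the multivector containing `x`. -/
noncomputable def star (x : X) : X :=
  ((F.isMV _ (F.mclass_spec x).1).2).exists.choose

/-- `[x]°` : the regular part of the multivector of `x`. -/
noncomputable def regPart (x : X) : Set X :=
  if L.Regular (F.mclass x) then F.mclass x else F.mclass x \ {F.star x}

/-- The multivalued map `Π_𝒱`. -/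
noncomputable def Pi (x : X) : Set X :=
  if x = F.star x then L.clPt x \ F.regPart x else {F.star x}

/-- The multivalued map of the multivector field restricted to the subcomplex `W`. -/
noncomputable def PiIn (W : Set X) (x : X) : Set X := F.Pi x ∩ W

/-- `φ : ℤ → X` is a full solution of the multivector field restricted to `W`. -/
def IsSolIn (W : Set X) (φ : ℤ → X) : Prop := ∀ i, φ (i + 1) ∈ F.PiIn W (φ i)

/-- There is a full solution (of the field restricted to `W`) through `x` with values in `A`. -/
def FullSolThroughIn (W : Set X) (x : X) (A : Set X) : Prop :=
  ∃ φ : ℤ → X, F.IsSolIn W φ ∧ (∃ i, φ i = x) ∧ ∀ i, φ i ∈ A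

/-- `A` is `𝒱`-compatible. -/
def Compat (A : Set X) : Prop := ∀ x ∈ A, F.mclass x ⊆ A

/-- `[A]⁻` : the maximal `𝒱`-compatible subset of `A`. -/
def lowerC (A : Set X) : Set X := {x ∈ A | F.mclass x ⊆ A}

/-- `[A]⁺` : the minimal `𝒱`-compatible superset of `A`. -/
def upperC (A : Set X) : Set X := ⋃ x ∈ A, F.mclass x

/-- `Inv A`, the invariant part of `A`, computed in the subcomplex `W`. -/
def InvPartIn (W A : Set X) : Set X :=
  {x ∈ A | F.FullSolThroughIn W (F.star x) (F.lowerC A)}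

/-- `A` is invariant (within the subcomplex `W`). -/
def InvariantIn (W A : Set X) : Prop := F.InvPartIn W A = A

/-- `φ` is a path (solution) on the integer interval `[a,b]`, within the subcomplex `W`. -/
def IsPathOnIn (W : Set X) (a b : ℤ) (φ : ℤ → X) : Prop :=
  ∀ i, a ≤ i → i < b → φ (i + 1) ∈ F.PiIn W (φ i)

/-- `S` admits an internal tangency within the subcomplex `W`. -/
def HasInternalTangencyIn (W S : Set X) : Prop :=
  ∃ (a b : ℤ) (φ : ℤ → X), a ≤ b ∧ F.IsPathOnIn W a b φ ∧
    (∀ i, a ≤ i → i ≤ b → φ i ∈ L.clsIn W S) ∧ φ a ∈ S ∧ φ b ∈ S ∧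
    ∃ i, a ≤ i ∧ i ≤ b ∧ φ i ∈ L.moIn W S

/-- `S` is an isolated invariant set within the subcomplex `W`. -/
def IsoInvIn (W S : Set X) : Prop :=
  F.InvariantIn W S ∧ ¬ F.HasInternalTangencyIn W S

/-- `N` is a trapping region within the subcomplex `W`. -/
def TrappingIn (W N : Set X) : Prop :=
  N ⊆ W ∧ F.Compat N ∧ ∀ x ∈ N, F.PiIn W x ⊆ N

/-- `N` is a backward trapping region within the subcomplex `W`. -/
def BackTrappingIn (W N : Set X) : Prop :=
  N ⊆ W ∧ F.Compat N ∧ ∀ x ∈ W, ∀ y ∈ F.PiIn W x, y ∈ N → x ∈ N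

/-- `A` is an attractor within the subcomplex `W`. -/
def AttractorIn (W A : Set X) : Prop :=
  ∃ N, F.TrappingIn W N ∧ A = F.InvPartIn W N

/-- `A` is a repeller within the subcomplex `W`. -/
def RepellerIn (W A : Set X) : Prop :=
  ∃ N, F.BackTrappingIn W N ∧ A = F.InvPartIn W N

/-- The α-limit set of a full solution `φ`. -/
def alphaIn (W : Set X) (φ : ℤ → X) : Set X :=
  ⋂ k : ℕ, F.InvPartIn W (F.upperC (φ '' {i : ℤ | i ≤ -(k : ℤ)}))

/-- The ω-limit set of a full solution `φ`. -/
def omegaIn (W : Set X) (φ : ℤ → X) : Set X :=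
  ⋂ k : ℕ, F.InvPartIn W (F.upperC (φ '' {i : ℤ | (k : ℤ) ≤ i}))

/-- `C(A',A)` : the set of cells lying on connections running from `A'` to `A`. -/
def ConnIn (W A' A : Set X) : Set X :=
  {x | ∃ φ : ℤ → X, F.IsSolIn W φ ∧ (∃ i, φ i = F.star x) ∧
        F.alphaIn W φ ⊆ A' ∧ F.omegaIn W φ ⊆ A}

/-- `(A, Rp)` is an attractor-repeller pair in the subcomplex `W`. -/
def ARPairIn (W A Rp : Set X) : Prop :=
  F.AttractorIn W A ∧ F.RepellerIn W Rp ∧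
    A = F.InvPartIn W (W \ Rp) ∧ Rp = F.InvPartIn W (W \ A)

/-- `M` is a Morse decomposition of the subcomplex `W`, with admissible order `le`. -/
def MorseDecompIn (W : Set X) {P : Type*} [Finite P] (le : P → P → Prop)
    (M : P → Set X) : Prop :=
  IsPartialOrder P le ∧
  (∀ r, F.IsoInvIn W (M r)) ∧
  (∀ r r', r ≠ r' → Disjoint (M r) (M r')) ∧
  (∀ φ : ℤ → X, F.IsSolIn W φ →
    ∃ r r', le r r' ∧ F.alphaIn W φ ⊆ M r' ∧ F.omegaIn W φ ⊆ M r) ∧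
  (∀ φ : ℤ → X, F.IsSolIn W φ → ∀ r,
    F.alphaIn W φ ⊆ M r → F.omegaIn W φ ⊆ M r → Set.range φ ⊆ M r)

/-- The Morse set `M(I)` of a family of sets indexed by `I ⊆ P`. -/
def MorseSetIn (W : Set X) {P : Type*} (M : P → Set X) (I : Set P) : Set X :=
  ⋃ r ∈ I, ⋃ r' ∈ I, F.ConnIn W (M r') (M r)

/-- `(P₁, P₂)` is an index pair for the isolated invariant set `S`. -/
def IndexPair (S P₁ P₂ : Set X) : Prop :=
  L.Closed P₁ ∧ L.Closed P₂ ∧ P₂ ⊆ P₁ ∧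
  (∀ x ∈ P₂, ∀ y ∈ F.Pi x, y ∈ P₁ → y ∈ P₂) ∧
  (∀ x ∈ P₁, (∃ y ∈ F.Pi x, y ∉ P₁) → x ∈ P₂) ∧
  S = F.InvPartIn Set.univ (P₁ \ P₂)

/-- `x ⤳_A y` : there is a path of length at least two in `A` from `x★` to `y★`. -/
def PathConn (A : Set X) (x y : X) : Prop :=
  ∃ (a b : ℤ) (φ : ℤ → X), a < b ∧
    (∀ i, a ≤ i → i < b → φ (i + 1) ∈ F.Pi (φ i)) ∧
    (∀ i, a ≤ i → i ≤ b → φ i ∈ A) ∧ φ a = F.star x ∧ φ b = F.star y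

/-- The chain recurrent set. -/
def CR : Set X := {x | F.PathConn Set.univ x x}

/-- `B` is a basic set: an equivalence class of mutual connectedness in `CR`. -/
def IsBasicSet (B : Set X) : Prop :=
  ∃ x ∈ F.CR, B = {y ∈ F.CR | F.PathConn Set.univ x y ∧ F.PathConn Set.univ y x}

/-- The set `E_P` of cells of `P₁` all of whose forward solutions meet `P₂`. -/
def Ep (P₁ P₂ : Set X) : Set X :=
  {x ∈ P₁ | ∀ φ : ℕ → X, φ 0 = x → (∀ i, φ (i + 1) ∈ F.Pi (φ i)) → ∃ i, φ i ∈ P₂}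

/-- The preorder `≤_𝒱` induced by the arrows of the multivector field. -/
def leV : X → X → Prop := Relation.ReflTransGen (fun y x => y ∈ F.Pi x)

/-- The multivector field is acyclic: `≤_𝒱` is a partial order. -/
def Acyclic : Prop := ∀ x y, F.leV x y → F.leV y x → x = y

end MVField

end CMVF

open CMVF

variable {R : Type*} [Ring R] {X : Type*} [Fintype X]

/-! Attractors are forward and repellers backward invariant along full solutions: glue the full
solution witnessing invariance to the given one. Hence a solution through a point outside an
attractor `A` stays outside `A` in the past, and its α-limit set lies in `Inv (X \ A)`; dually
for repellers and ω-limit sets. Conversely, `X` being finite, every full solution takes some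
value infinitely often in the past (and in the future); running around the loop between two such
times shows that this value lies in the α-limit (ω-limit) set. So a full solution in `X \ Rp`
through `x★` with `x ∉ A` would have a value in `α ⊆ Rp`, whence `Inv (X \ Rp) ⊆ A`; the
reverse inclusion is `A = Inv A ⊆ Inv (X \ Rp)`. -/

namespace CMVF.MVField

variable {L : Lefschetz R X} (F : MVField L)

section Multivectors

lemma mclass_eq_of_mem {x y : X} (h : y ∈ F.mclass x) : F.mclass y = F.mclass x :=
  (F.cover y).unique (F.mclass_spec y) ⟨(F.mclass_spec x).1, h⟩

lemma star_spec (x : X) : F.star x ∈ F.mclass x ∧ ∀ z ∈ F.mclass x, L.le z (F.star x) :=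
  (F.isMV _ (F.mclass_spec x).1).2.exists.choose_spec

lemma star_mem_mclass (x : X) : F.star x ∈ F.mclass x := (F.star_spec x).1

lemma star_eq_of_mem {x y : X} (h : y ∈ F.mclass x) : F.star y = F.star x := by
  have hx := F.star_spec x
  rw [← F.mclass_eq_of_mem h] at hx
  exact (F.isMV _ (F.mclass_spec y).1).2.unique (F.star_spec y) hx

lemma mem_mclass_star (x : X) : x ∈ F.mclass (F.star x) := by
  rw [F.mclass_eq_of_mem (F.star_mem_mclass x)]
  exact (F.mclass_spec x).2

lemma pi_of_ne_star {x : X} (h : x ≠ F.star x) : F.Pi x = {F.star x} := by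
  simp [MVField.Pi, h]

end Multivectors

section Compat

variable {F}

lemma compat_univ : F.Compat Set.univ := fun _ _ => Set.subset_univ _

lemma Compat.mem_of_star_mem {A : Set X} (hA : F.Compat A) {x : X} (h : F.star x ∈ A) :
    x ∈ A :=
  hA _ h (F.mem_mclass_star x)

lemma Compat.diff {W B : Set X} (hW : F.Compat W) (hB : F.Compat B) : F.Compat (W \ B) := by
  intro x hx y hy
  refine ⟨hW x hx.1 hy, fun hyB => hx.2 ?_⟩
  exact hB y hyB (F.mclass_eq_of_mem hy ▸ (F.mclass_spec x).2)

variable (F)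

lemma subset_upperC (S : Set X) : S ⊆ F.upperC S :=
  fun x hx => Set.mem_biUnion hx (F.mclass_spec x).2

lemma compat_upperC (S : Set X) : F.Compat (F.upperC S) := by
  intro x hx
  obtain ⟨s, hs, hxs⟩ := Set.mem_iUnion₂.1 hx
  rw [F.mclass_eq_of_mem hxs]
  exact Set.subset_biUnion_of_mem hs

lemma upperC_subset {S B : Set X} (hB : F.Compat B) (h : S ⊆ B) : F.upperC S ⊆ B :=
  Set.iUnion₂_subset fun s hs => hB s (h hs)

end Compat

section Solutions

variable {F} {W : Set X} {φ σ : ℤ → X}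

lemma IsSolIn.apply_mem (hφ : F.IsSolIn W φ) (i : ℤ) : φ i ∈ W := by
  simpa using (hφ (i - 1)).2

lemma IsSolIn.exists_eq_star (hφ : F.IsSolIn W φ) (i : ℤ) :
    ∃ i', i ≤ i' ∧ i' ≤ i + 1 ∧ φ i' = F.star (φ i) := by
  by_cases h : φ i = F.star (φ i)
  · exact ⟨i, le_rfl, by omega, h⟩
  · have := (hφ i).1
    rw [F.pi_of_ne_star h] at this
    exact ⟨i + 1, by omega, le_rfl, this⟩

lemma IsSolIn.comp_add_const (hφ : F.IsSolIn W φ) (c : ℤ) :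
    F.IsSolIn W (fun i => φ (i + c)) := by
  intro i
  simpa [add_right_comm] using hφ (i + c)

lemma IsSolIn.glue (hσ : F.IsSolIn W σ) (hφ : F.IsSolIn W φ) {j : ℤ}
    (h : φ (j + 1) ∈ F.PiIn W (σ j)) :
    F.IsSolIn W (fun i => if i ≤ j then σ i else φ i) := by
  intro i
  rcases lt_trichotomy i j with hij | rfl | hij
  · simpa [hij.le, Int.add_one_le_iff.2 hij] using hσ i
  · simpa using h
  · simpa [hij.not_ge, (hij.trans (lt_add_one i)).not_ge] using hφ i

lemma IsSolIn.periodize (hφ : F.IsSolIn W φ) {a b : ℤ} (hab : a < b) (h : φ a = φ b) :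
    F.IsSolIn W (fun i => φ (a + (i - a) % (b - a))) := by
  intro i
  have hr := Int.emod_nonneg (i - a) (show b - a ≠ 0 by omega)
  have hr' := Int.emod_lt_of_pos (i - a) (show 0 < b - a by omega)
  have hstep : (i + 1 - a) % (b - a) = ((i - a) % (b - a) + 1) % (b - a) := by
    rw [Int.emod_add_emod]; ring_nf
  simp only [hstep]
  set r := (i - a) % (b - a)
  rcases (show r + 1 < b - a ∨ r + 1 = b - a by omega) with hlt | heq
  · rw [Int.emod_eq_of_lt (by omega) hlt, ← add_assoc]
    exact hφ (a + r)
  · rw [heq, Int.emod_self, add_zero, h, show b = a + r + 1 by omega]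
    exact hφ (a + r)

end Solutions

section InvariantPart

variable {F} {W N : Set X}

lemma invPartIn_subset (W N : Set X) : F.InvPartIn W N ⊆ N := fun _ hx => hx.1

lemma invPartIn_mono {A B : Set X} (h : A ⊆ B) : F.InvPartIn W A ⊆ F.InvPartIn W B := by
  rintro x ⟨hxA, φ, hφ, hx, hφA⟩
  exact ⟨h hxA, φ, hφ, hx, fun i => ⟨h (hφA i).1, (hφA i).2.trans h⟩⟩

lemma Compat.invPartIn (hN : F.Compat N) : F.Compat (F.InvPartIn W N) := by
  rintro x ⟨hxN, φ, hφ, hx, hφN⟩ z hz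
  exact ⟨hN x hxN hz, φ, hφ, F.star_eq_of_mem hz ▸ hx, hφN⟩

lemma IsSolIn.apply_mem_invPartIn {φ : ℤ → X} (hφ : F.IsSolIn W φ) (hN : F.Compat N)
    (hφN : ∀ i, φ i ∈ N) (j : ℤ) : φ j ∈ F.InvPartIn W N := by
  obtain ⟨j', -, -, hj'⟩ := hφ.exists_eq_star j
  exact ⟨hφN j, φ, hφ, ⟨j', hj'⟩, fun i => ⟨hφN i, hN _ (hφN i)⟩⟩

lemma Compat.invariantIn_invPartIn (hN : F.Compat N) : F.InvariantIn W (F.InvPartIn W N) := by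
  refine (F.invPartIn_subset _ _).antisymm ?_
  intro x hx
  obtain ⟨-, φ, hφ, hx', hφN⟩ := id hx
  have hφI : ∀ i, φ i ∈ F.InvPartIn W N := hφ.apply_mem_invPartIn hN fun i => (hφN i).1
  exact ⟨hx, φ, hφ, hx', fun i => ⟨hφI i, hN.invPartIn _ (hφI i)⟩⟩

lemma InvariantIn.subset_invPartIn {A B : Set X} (hA : F.InvariantIn W A) (h : A ⊆ B) :
    A ⊆ F.InvPartIn W B := by
  rw [← hA]
  exact invPartIn_mono h

end InvariantPart

section Trapping

variable {F} {W N : Set X} {φ : ℤ → X} {i j : ℤ}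

lemma TrappingIn.apply_mem_of_le (hN : F.TrappingIn W N) (hφ : F.IsSolIn W φ)
    (hi : φ i ∈ N) (hij : i ≤ j) : φ j ∈ N := by
  induction j, hij using Int.leInduction with
  | base => exact hi
  | succ k _ ih => exact hN.2.2 _ ih (hφ k)

lemma BackTrappingIn.apply_mem_of_le (hN : F.BackTrappingIn W N) (hφ : F.IsSolIn W φ)
    (hj : φ j ∈ N) (hij : i ≤ j) : φ i ∈ N := by
  induction i, hij using Int.leInductionDown with
  | base => exact hj
  | pred k _ ih => exact hN.2.2 _ (hφ.apply_mem _) _ (by simpa using hφ (k - 1)) ih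

/-- The full solution witnessing `φ i ∈ Inv N` is glued in front of `φ`; trapping keeps the
forward half of `φ` in `N`. -/
lemma TrappingIn.apply_mem_invPartIn_of_le (hN : F.TrappingIn W N) (hφ : F.IsSolIn W φ)
    (hi : φ i ∈ F.InvPartIn W N) (hij : i ≤ j) : φ j ∈ F.InvPartIn W N := by
  obtain ⟨hiN, σ, hσ, ⟨s, hs⟩, hσN⟩ := id hi
  obtain ⟨i', hii', hi'i, hi'⟩ := hφ.exists_eq_star i
  rcases hij.eq_or_lt with rfl | hij
  · exact hi
  have hi'N : φ i' ∈ N := hi' ▸ hN.2.1 _ hiN (F.star_mem_mclass _)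
  have hψ := (hσ.comp_add_const (s - i')).glue hφ (j := i' - 1) <| by
    simpa [show i' - 1 + (s - i') = s - 1 by ring, hi', ← hs] using hσ (s - 1)
  have hψN : ∀ k, (if k ≤ i' - 1 then σ (k + (s - i')) else φ k) ∈ N := fun k => by
    split_ifs with hk
    · exact (hσN _).1
    · exact hN.apply_mem_of_le hφ hi'N (by omega)
  simpa [show ¬ j ≤ i' - 1 by omega] using hψ.apply_mem_invPartIn hN.2.1 hψN j

lemma BackTrappingIn.apply_mem_invPartIn_of_le (hN : F.BackTrappingIn W N)
    (hφ : F.IsSolIn W φ) (hj : φ j ∈ F.InvPartIn W N) (hij : i ≤ j) :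
    φ i ∈ F.InvPartIn W N := by
  obtain ⟨hjN, σ, hσ, ⟨s, hs⟩, hσN⟩ := hj
  obtain ⟨j', hjj', -, hj'⟩ := hφ.exists_eq_star j
  have hj'N : φ j' ∈ N := hj' ▸ hN.2.1 _ hjN (F.star_mem_mclass _)
  have hψ := hφ.glue (hσ.comp_add_const (s - j')) (j := j') <| by
    simpa [show j' + 1 + (s - j') = s + 1 by ring, hj', ← hs] using hσ s
  have hψN : ∀ k, (if k ≤ j' then φ k else σ (k + (s - j'))) ∈ N := fun k => by
    split_ifs with hk
    · exact hN.apply_mem_of_le hφ hj'N hk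
    · exact (hσN _).1
  simpa [show i ≤ j' by omega] using hψ.apply_mem_invPartIn hN.2.1 hψN i

end Trapping

section AttractorRepeller

variable {F} {W A : Set X} {φ : ℤ → X} {i j : ℤ}

lemma AttractorIn.compat (hA : F.AttractorIn W A) : F.Compat A := by
  obtain ⟨N, hN, rfl⟩ := hA
  exact hN.2.1.invPartIn

lemma RepellerIn.compat (hA : F.RepellerIn W A) : F.Compat A := by
  obtain ⟨N, hN, rfl⟩ := hA
  exact hN.2.1.invPartIn

lemma AttractorIn.invariantIn (hA : F.AttractorIn W A) : F.InvariantIn W A := by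
  obtain ⟨N, hN, rfl⟩ := hA
  exact hN.2.1.invariantIn_invPartIn

lemma RepellerIn.invariantIn (hA : F.RepellerIn W A) : F.InvariantIn W A := by
  obtain ⟨N, hN, rfl⟩ := hA
  exact hN.2.1.invariantIn_invPartIn

lemma AttractorIn.apply_mem_of_le (hA : F.AttractorIn W A) (hφ : F.IsSolIn W φ)
    (hi : φ i ∈ A) (hij : i ≤ j) : φ j ∈ A := by
  obtain ⟨N, hN, rfl⟩ := hA
  exact hN.apply_mem_invPartIn_of_le hφ hi hij

lemma RepellerIn.apply_mem_of_le (hA : F.RepellerIn W A) (hφ : F.IsSolIn W φ)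
    (hj : φ j ∈ A) (hij : i ≤ j) : φ i ∈ A := by
  obtain ⟨N, hN, rfl⟩ := hA
  exact hN.apply_mem_invPartIn_of_le hφ hj hij

end AttractorRepeller

section LimitSets

variable {F} {W B : Set X} {φ : ℤ → X}

lemma alphaIn_subset_invPartIn (hB : F.Compat B) {i₀ : ℤ} (h : ∀ i ≤ i₀, φ i ∈ B) :
    F.alphaIn W φ ⊆ F.InvPartIn W B :=
  Set.iInter_subset_of_subset (-i₀).toNat <| invPartIn_mono <| F.upperC_subset hB <| by
    rintro _ ⟨i, hi, rfl⟩
    exact h i (by simp only [Set.mem_ofPred_eq] at hi; omega)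

lemma omegaIn_subset_invPartIn (hB : F.Compat B) {i₀ : ℤ} (h : ∀ i ≥ i₀, φ i ∈ B) :
    F.omegaIn W φ ⊆ F.InvPartIn W B :=
  Set.iInter_subset_of_subset i₀.toNat <| invPartIn_mono <| F.upperC_subset hB <| by
    rintro _ ⟨i, hi, rfl⟩
    exact h i (by simp only [Set.mem_ofPred_eq] at hi; omega)

/-- Running around the loop `φ a = φ b` forever is a full solution inside `φ '' [a, b]`. -/
lemma IsSolIn.apply_mem_invPartIn_upperC_of_eq (hφ : F.IsSolIn W φ) {a b : ℤ} (hab : a < b)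
    (h : φ a = φ b) {T : Set ℤ} (hT : Set.Icc a b ⊆ T) :
    φ a ∈ F.InvPartIn W (F.upperC (φ '' T)) := by
  have hψ := hφ.periodize hab h
  have hψT : ∀ i, φ (a + (i - a) % (b - a)) ∈ F.upperC (φ '' T) := fun i => by
    have := Int.emod_nonneg (i - a) (show b - a ≠ 0 by omega)
    have := Int.emod_lt_of_pos (i - a) (show 0 < b - a by omega)
    exact F.subset_upperC _ ⟨_, hT ⟨by omega, by omega⟩, rfl⟩
  simpa using hψ.apply_mem_invPartIn (F.compat_upperC _) hψT a

lemma IsSolIn.exists_apply_mem_alphaIn (hφ : F.IsSolIn W φ) : ∃ i, φ i ∈ F.alphaIn W φ := by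
  obtain ⟨y, hy⟩ := Finite.exists_infinite_fiber fun n : ℕ => φ (-n)
  rw [Set.infinite_coe_iff] at hy
  obtain ⟨n₀, hn₀⟩ := hy.nonempty
  refine ⟨-n₀, Set.mem_iInter.2 fun k => ?_⟩
  obtain ⟨n₁, hn₁, hkn₁⟩ := hy.exists_gt k
  obtain ⟨n₂, hn₂, hn₁₂⟩ := hy.exists_gt n₁
  simp only [Set.mem_preimage, Set.mem_singleton_iff] at hn₀ hn₁ hn₂
  rw [hn₀, ← hn₂]
  exact hφ.apply_mem_invPartIn_upperC_of_eq (by omega) (hn₂.trans hn₁.symm)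
    fun i hi => by simp only [Set.mem_ofPred_eq, Set.mem_Icc] at hi ⊢; omega

lemma IsSolIn.exists_apply_mem_omegaIn (hφ : F.IsSolIn W φ) : ∃ i, φ i ∈ F.omegaIn W φ := by
  obtain ⟨y, hy⟩ := Finite.exists_infinite_fiber fun n : ℕ => φ n
  rw [Set.infinite_coe_iff] at hy
  obtain ⟨n₀, hn₀⟩ := hy.nonempty
  refine ⟨n₀, Set.mem_iInter.2 fun k => ?_⟩
  obtain ⟨n₁, hn₁, hkn₁⟩ := hy.exists_gt k
  obtain ⟨n₂, hn₂, hn₁₂⟩ := hy.exists_gt n₁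
  simp only [Set.mem_preimage, Set.mem_singleton_iff] at hn₀ hn₁ hn₂
  rw [hn₀, ← hn₁]
  exact hφ.apply_mem_invPartIn_upperC_of_eq (by omega) (hn₁.trans hn₂.symm)
    fun i hi => by simp only [Set.mem_ofPred_eq, Set.mem_Icc] at hi ⊢; omega

end LimitSets

section Pairs

variable {F} {W A Rp : Set X}

/-- A solution staying outside `Rp` has a recurrent value, which lies in its α-limit set. -/
lemma invPartIn_diff_subset_of_alphaIn_subset (hA : F.Compat A)
    (h : ∀ x, x ∉ A → ∀ φ : ℤ → X, F.IsSolIn W φ → (∃ i, φ i = x) →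
      F.alphaIn W φ ⊆ Rp) :
    F.InvPartIn W (W \ Rp) ⊆ A := by
  rintro x ⟨-, σ, hσ, hx, hσRp⟩
  by_contra hxA
  obtain ⟨i, hi⟩ := hσ.exists_apply_mem_alphaIn
  exact (hσRp i).1.2 (h _ (fun hx' => hxA (hA.mem_of_star_mem hx')) σ hσ hx hi)

lemma invPartIn_diff_subset_of_omegaIn_subset (hRp : F.Compat Rp)
    (h : ∀ x, x ∉ Rp → ∀ φ : ℤ → X, F.IsSolIn W φ → (∃ i, φ i = x) →
      F.omegaIn W φ ⊆ A) :
    F.InvPartIn W (W \ A) ⊆ Rp := by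
  rintro x ⟨-, σ, hσ, hx, hσA⟩
  by_contra hxRp
  obtain ⟨i, hi⟩ := hσ.exists_apply_mem_omegaIn
  exact (hσA i).1.2 (h _ (fun hx' => hxRp (hRp.mem_of_star_mem hx')) σ hσ hx hi)

end Pairs

end CMVF.MVField

theorem attractor_repeller_pair_characterization_general (L : Lefschetz R X) (F : MVField L)
    (A Rp : Set X) :
    F.ARPairIn Set.univ A Rp ↔
      (F.AttractorIn Set.univ A ∧ F.RepellerIn Set.univ Rp) ∧
      A ∩ Rp = ∅ ∧
      (∀ x, x ∉ A → ∀ φ : ℤ → X, F.IsSolIn Set.univ φ → (∃ i, φ i = x) →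
        F.alphaIn Set.univ φ ⊆ Rp) ∧
      (∀ x, x ∉ Rp → ∀ φ : ℤ → X, F.IsSolIn Set.univ φ → (∃ i, φ i = x) →
        F.omegaIn Set.univ φ ⊆ A) := by
  constructor
  · rintro ⟨hA, hRp, hA_eq, hRp_eq⟩
    refine ⟨⟨hA, hRp⟩, ?_, ?_, ?_⟩
    · rw [hA_eq, ← Set.disjoint_iff_inter_eq_empty]
      exact Set.disjoint_sdiff_left.mono_left (F.invPartIn_subset _ _)
    · rintro x hx φ hφ ⟨i₀, rfl⟩
      rw [hRp_eq]
      exact MVField.alphaIn_subset_invPartIn (MVField.compat_univ.diff hA.compat)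
        fun i hi => ⟨trivial, fun hiA => hx (hA.apply_mem_of_le hφ hiA hi)⟩
    · rintro x hx φ hφ ⟨i₀, rfl⟩
      rw [hA_eq]
      exact MVField.omegaIn_subset_invPartIn (MVField.compat_univ.diff hRp.compat)
        fun i hi => ⟨trivial, fun hiRp => hx (hRp.apply_mem_of_le hφ hiRp hi)⟩
  · rintro ⟨⟨hA, hRp⟩, hARp, hα, hω⟩
    have hA_sub : A ⊆ Set.univ \ Rp := Set.subset_sdiff.2
      ⟨Set.subset_univ A, Set.disjoint_iff_inter_eq_empty.2 hARp⟩
    have hRp_sub : Rp ⊆ Set.univ \ A := Set.subset_sdiff.2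
      ⟨Set.subset_univ Rp, Set.disjoint_iff_inter_eq_empty.2 (Set.inter_comm A Rp ▸ hARp)⟩
    refine ⟨hA, hRp, ?_, ?_⟩
    · exact (hA.invariantIn.subset_invPartIn hA_sub).antisymm
        (MVField.invPartIn_diff_subset_of_alphaIn_subset hA.compat hα)
    · exact (hRp.invariantIn.subset_invPartIn hRp_sub).antisymm
        (MVField.invPartIn_diff_subset_of_omegaIn_subset hRp.compat hω)

/-- Theorem: `(A, Rp)` is an attractor-repeller pair in `X` if and only if
(i) `A` is an attractor and `Rp` a repeller, (ii) `A ∩ Rp = ∅`,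
(iii) every full solution through an `x ∉ A` has `α(ρ) ⊆ Rp`,
(iv) every full solution through an `x ∉ Rp` has `ω(ρ) ⊆ A`. -/
theorem attractor_repeller_pair_characterization (L : Lefschetz R X) (F : MVField L)
    (hX : F.InvariantIn Set.univ Set.univ) (A Rp : Set X) :
    F.ARPairIn Set.univ A Rp ↔
      (F.AttractorIn Set.univ A ∧ F.RepellerIn Set.univ Rp) ∧
      A ∩ Rp = ∅ ∧
      (∀ x, x ∉ A → ∀ φ : ℤ → X, F.IsSolIn Set.univ φ → (∃ i, φ i = x) →
        F.alphaIn Set.univ φ ⊆ Rp) ∧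
      (∀ x, x ∉ Rp → ∀ φ : ℤ → X, F.IsSolIn Set.univ φ → (∃ i, φ i = x) →
        F.omegaIn Set.univ φ ⊆ A) :=
  attractor_repeller_pair_characterization_general L F A Rp
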